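/- Let p ∈ (0,1) and x > 0, and define H_p(x) = ∫_0^1 (1 - (1-p+pt)^x)/(1-t) dt. Then ψ(x+1) + γ + ln p ≤ H_p(x) ≤ ψ(x+1) + γ. -/

import Mathlib

noncomputable def digamma (x : ℝ) : ℝ := deriv (fun y => Real.log (Real.Gamma y)) x

noncomputable def Hp (p x : ℝ) : ℝ := ∫ t in (0:ℝ)..1, (1 - (1 - p + p * t) ^ x) / (1 - t)

/-!
The substitution `u = 1 - p + p t` turns `Hp p x` into `∫_{1-p}^1 (1 - u^x)/(1 - u) du`, that is
`H(x) = ∫_0^1 (1 - u^x)/(1 - u) du` minus the integral over `[0, 1 - p]`, which lies between `0`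
and `∫_0^{1-p} du/(1 - u) = -log p`. It remains to see `H(x) = ψ(x + 1) + γ`. Both sides vanish
at `0`, are monotone on `[0, ∞)` (the right side by log-convexity of `Γ`) and satisfy
`f(x + 1) = f(x) + 1/(x + 1)`. Their difference is then 1-periodic and vanishes at the integers,
and squeezing `x + n` between consecutive integers bounds it by `1/(n + 1)`.
-/

open Real MeasureTheory Set Filter Topology intervalIntegral

theorem eqOn_Ici_of_monotoneOn_of_add_one {F G r : ℝ → ℝ}
    (hF : MonotoneOn F (Ici 0)) (hG : MonotoneOn G (Ici 0))
    (hFr : ∀ x, 0 ≤ x → F (x + 1) = F x + r x) (hGr : ∀ x, 0 ≤ x → G (x + 1) = G x + r x)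
    (hr : Tendsto r atTop (𝓝 0)) (h0 : F 0 = G 0) : EqOn F G (Ici 0) := by
  have periodic : ∀ x, 0 ≤ x → ∀ n : ℕ, F (x + n) - G (x + n) = F x - G x := by
    intro x hx n
    induction n with
    | zero => simp
    | succ n ih =>
      have hxn : 0 ≤ x + n := by positivity
      rw [Nat.cast_succ, ← add_assoc, hFr _ hxn, hGr _ hxn, ← ih]
      ring
  intro x (hx : 0 ≤ x)
  have bound : ∀ n : ℕ, |F x - G x| ≤ r (n + ⌊x⌋₊ : ℕ) := by
    intro n
    set k : ℕ := n + ⌊x⌋₊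
    have hk0 : (0 : ℝ) ≤ k := Nat.cast_nonneg k
    have hkx : (k : ℝ) ≤ x + n := by
      simp only [k, Nat.cast_add]
      linarith [Nat.floor_le hx]
    have hxk : x + n ≤ k + 1 := by
      simp only [k, Nat.cast_add]
      linarith [Nat.lt_floor_add_one x]
    have hk1 : (0 : ℝ) ≤ k + 1 := by linarith
    have hFG : F k = G k := sub_eq_zero.mp (by simpa [h0] using periodic 0 le_rfl k)
    rw [← periodic x hx n, abs_sub_le_iff]
    constructor <;>
      linarith [hF hk0 (hk0.trans hkx) hkx, hG hk0 (hk0.trans hkx) hkx,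
        hF (hk0.trans hkx) hk1 hxk, hG (hk0.trans hkx) hk1 hxk,
        hFr _ hk0, hGr _ hk0]
  have hlim : Tendsto (fun n : ℕ => r (n + ⌊x⌋₊ : ℕ)) atTop (𝓝 0) :=
    hr.comp (tendsto_natCast_atTop_atTop.comp (tendsto_add_atTop_nat _))
  exact sub_eq_zero.mp (abs_nonpos_iff.mp (ge_of_tendsto' hlim bound))

section HarmonicIntegral

noncomputable def harmonicKernel (x u : ℝ) : ℝ := (1 - u ^ x) / (1 - u)

/-- Interpolates the harmonic numbers: `harmonicIntegral n = harmonic n` for `n : ℕ`. -/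
noncomputable def harmonicIntegral (x : ℝ) : ℝ := ∫ u in (0:ℝ)..1, harmonicKernel x u

variable {x y u : ℝ}

lemma harmonicKernel_nonneg (hx : 0 ≤ x) (hu : u ∈ Icc (0:ℝ) 1) : 0 ≤ harmonicKernel x u :=
  div_nonneg (sub_nonneg.mpr (rpow_le_one hu.1 hu.2 hx)) (sub_nonneg.mpr hu.2)

lemma harmonicKernel_mono (hx : 0 ≤ x) (hxy : x ≤ y) (hu : u ∈ Icc (0:ℝ) 1) :
    harmonicKernel x u ≤ harmonicKernel y u :=
  div_le_div_of_nonneg_right (sub_le_sub_left (rpow_le_rpow_of_exponent_ge' hu.1 hu.2 hx hxy) 1)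
    (sub_nonneg.mpr hu.2)

lemma harmonicKernel_le_max (hx : 0 ≤ x) (hu : u ∈ Icc (0:ℝ) 1) :
    harmonicKernel x u ≤ max 1 x := by
  refine div_le_of_le_mul₀ (sub_nonneg.mpr hu.2) (le_max_of_le_left zero_le_one) ?_
  rcases le_total x 1 with h | h
  · have hux : u ≤ u ^ x := by
      simpa using rpow_le_rpow_of_exponent_ge' hu.1 hu.2 hx h
    nlinarith [le_max_left 1 x, hu.2]
  · have bernoulli : 1 + x * (u - 1) ≤ u ^ x := by
      simpa using one_add_mul_self_le_rpow_one_add (by linarith [hu.1] : -1 ≤ u - 1) h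
    nlinarith [le_max_right 1 x, hu.2]

lemma intervalIntegrable_harmonicKernel (hx : 0 ≤ x) {a b : ℝ} (ha : a ∈ Icc (0:ℝ) 1)
    (hb : b ∈ Icc (0:ℝ) 1) : IntervalIntegrable (harmonicKernel x) volume a b := by
  refine (intervalIntegrable_const (c := max 1 x)).mono_fun' ?_ ?_
  · exact (((measurable_const.sub (continuous_rpow_const hx).measurable).div
      (measurable_const.sub measurable_id)).aestronglyMeasurable)
  · filter_upwards [ae_restrict_mem measurableSet_uIoc] with u hu
    have hu' : u ∈ Icc (0:ℝ) 1 := uIcc_subset_Icc ha hb (uIoc_subset_uIcc hu)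
    rw [norm_of_nonneg (harmonicKernel_nonneg hx hu')]
    exact harmonicKernel_le_max hx hu'

lemma harmonicIntegral_zero : harmonicIntegral 0 = 0 := by
  simp [harmonicIntegral, harmonicKernel]

lemma monotoneOn_harmonicIntegral : MonotoneOn harmonicIntegral (Ici 0) :=
  fun _ hx _ hy hxy => integral_mono_on zero_le_one
    (intervalIntegrable_harmonicKernel hx ⟨le_rfl, zero_le_one⟩ ⟨zero_le_one, le_rfl⟩)
    (intervalIntegrable_harmonicKernel hy ⟨le_rfl, zero_le_one⟩ ⟨zero_le_one, le_rfl⟩)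
    fun _ hu => harmonicKernel_mono hx hxy hu

lemma harmonicIntegral_add_one (hx : 0 ≤ x) :
    harmonicIntegral (x + 1) = harmonicIntegral x + (x + 1)⁻¹ := by
  have hint : ∀ y, 0 ≤ y → IntervalIntegrable (harmonicKernel y) volume 0 1 := fun y hy =>
    intervalIntegrable_harmonicKernel hy ⟨le_rfl, zero_le_one⟩ ⟨zero_le_one, le_rfl⟩
  have hdiff : EqOn (fun u => harmonicKernel (x + 1) u - harmonicKernel x u) (fun u => u ^ x)
      (Ioo 0 1) := by
    intro u ⟨hu0, hu1⟩
    have : 1 - u ≠ 0 := by linarith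
    simp only [harmonicKernel, rpow_add_one hu0.ne']
    field_simp
    ring
  have : harmonicIntegral (x + 1) - harmonicIntegral x = (x + 1)⁻¹ := calc
    _ = ∫ u in (0:ℝ)..1, (harmonicKernel (x + 1) u - harmonicKernel x u) :=
      (integral_sub (hint _ (by linarith)) (hint _ hx)).symm
    _ = ∫ u in (0:ℝ)..1, u ^ x := integral_congr_Ioo_of_le zero_le_one hdiff
    _ = (x + 1)⁻¹ := by
      rw [integral_rpow (Or.inl (by linarith))]
      simp [zero_rpow (by linarith : x + 1 ≠ 0)]
  linarith

end HarmonicIntegral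

section Digamma

variable {y : ℝ}

lemma differentiableAt_log_Gamma (hy : 0 < y) :
    DifferentiableAt ℝ (fun y => log (Gamma y)) y :=
  (differentiableOn_Gamma_Ioi.differentiableAt (Ioi_mem_nhds hy)).log (Gamma_pos_of_pos hy).ne'

lemma digamma_add_one (hy : 0 < y) : digamma (y + 1) = digamma y + y⁻¹ := by
  have hshift : (fun z => log (Gamma (z + 1))) =ᶠ[𝓝 y] fun z => log (Gamma z) + log z := by
    filter_upwards [eventually_gt_nhds hy] with z hz
    rw [Gamma_add_one hz.ne', log_mul hz.ne' (Gamma_pos_of_pos hz).ne', add_comm]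
  rw [digamma, ← deriv_comp_add_const, hshift.deriv_eq,
    deriv_fun_add (differentiableAt_log_Gamma hy) (differentiableAt_log hy.ne'), deriv_log, digamma]

lemma digamma_one : digamma 1 = -eulerMascheroniConstant := by
  rw [digamma, deriv.log (differentiableOn_Gamma_Ioi.differentiableAt (Ioi_mem_nhds one_pos))
    (by simp), Gamma_one, div_one, eulerMascheroniConstant_eq_neg_deriv, neg_neg]

lemma monotoneOn_digamma : MonotoneOn digamma (Ioi 0) :=
  convexOn_log_Gamma.monotoneOn_deriv fun _ hy => differentiableAt_log_Gamma hy

end Digamma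

theorem harmonicIntegral_eq_digamma {x : ℝ} (hx : 0 ≤ x) :
    harmonicIntegral x = digamma (x + 1) + eulerMascheroniConstant := by
  refine eqOn_Ici_of_monotoneOn_of_add_one
    (G := fun x => digamma (x + 1) + eulerMascheroniConstant) monotoneOn_harmonicIntegral ?_
    (fun _ hx => harmonicIntegral_add_one hx) (fun y hy => ?_)
    (tendsto_inv_atTop_zero.comp (tendsto_atTop_add_const_right _ 1 tendsto_id)) ?_ hx
  · intro a (ha : 0 ≤ a) b (hb : 0 ≤ b) hab
    have hmono : digamma (a + 1) ≤ digamma (b + 1) := monotoneOn_digamma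
      (show (0:ℝ) < a + 1 by linarith) (show (0:ℝ) < b + 1 by linarith) (by linarith)
    dsimp only
    linarith
  · simp only [digamma_add_one (by linarith : 0 < y + 1)]
    ring
  · simp [harmonicIntegral_zero, digamma_one]

section Hp

variable {p x : ℝ}

lemma Hp_eq_integral_harmonicKernel (hp : p ≠ 0) :
    Hp p x = ∫ u in (1 - p)..1, harmonicKernel x u := by
  have hsubst : ∀ t, (1 - (1 - p + p * t) ^ x) / (1 - t) =
      p * harmonicKernel x (p * t + (1 - p)) := by
    intro t
    rw [harmonicKernel, show 1 - (p * t + (1 - p)) = p * (1 - t) by ring, mul_div_assoc',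
      mul_div_mul_left _ _ hp, add_comm (p * t)]
  simp only [Hp, hsubst, intervalIntegral.integral_const_mul,
    integral_comp_mul_add (harmonicKernel x) hp, smul_eq_mul]
  rw [← mul_assoc, mul_inv_cancel₀ hp, one_mul, mul_zero, zero_add, mul_one, add_sub_cancel]

lemma integral_harmonicKernel_le_neg_log (hp0 : 0 < p) (hp1 : p ≤ 1) (hx : 0 ≤ x) :
    ∫ u in (0:ℝ)..(1 - p), harmonicKernel x u ≤ -log p := by
  have hcont : ContinuousOn (fun u : ℝ => (1 - u)⁻¹) (Icc 0 (1 - p)) :=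
    (continuousOn_const.sub continuousOn_id).inv₀ fun u hu =>
      (sub_pos.mpr (show u < 1 by linarith [hu.2])).ne'
  calc ∫ u in (0:ℝ)..(1 - p), harmonicKernel x u
      ≤ ∫ u in (0:ℝ)..(1 - p), (1 - u)⁻¹ := by
        refine integral_mono_on (by linarith)
          (intervalIntegrable_harmonicKernel hx ⟨le_rfl, zero_le_one⟩ ⟨by linarith, by linarith⟩)
          (hcont.intervalIntegrable_of_Icc (by linarith)) fun u hu => ?_
        rw [harmonicKernel, div_eq_mul_inv]
        exact mul_le_of_le_one_left (inv_nonneg.mpr (by linarith [hu.2]))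
          (by linarith [rpow_nonneg hu.1 x])
    _ = -log p := by
        rw [integral_comp_sub_left (fun v => v⁻¹), sub_sub_cancel, sub_zero,
          integral_inv_of_pos hp0 one_pos, one_div, log_inv]

end Hp

theorem Hp_digamma_bounds (p x : ℝ) (hp : p ∈ Set.Ioo (0:ℝ) 1) (hx : 0 < x) :
    digamma (x + 1) + Real.eulerMascheroniConstant + Real.log p ≤ Hp p x ∧
      Hp p x ≤ digamma (x + 1) + Real.eulerMascheroniConstant := by
  obtain ⟨hp0, hp1⟩ := hp
  have hsplit : Hp p x = harmonicIntegral x - ∫ u in (0:ℝ)..(1 - p), harmonicKernel x u := by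
    rw [Hp_eq_integral_harmonicKernel hp0.ne', harmonicIntegral,
      ← integral_add_adjacent_intervals (b := 1 - p)
        (intervalIntegrable_harmonicKernel hx.le ⟨le_rfl, zero_le_one⟩ ⟨by linarith, by linarith⟩)
        (intervalIntegrable_harmonicKernel hx.le ⟨by linarith, by linarith⟩ ⟨zero_le_one, le_rfl⟩)]
    ring
  have hlower : 0 ≤ ∫ u in (0:ℝ)..(1 - p), harmonicKernel x u :=
    integral_nonneg (by linarith) fun u hu => harmonicKernel_nonneg hx.le ⟨hu.1, by linarith [hu.2]⟩
  have hupper := integral_harmonicKernel_le_neg_log hp0 hp1.le hx.le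
  rw [hsplit, harmonicIntegral_eq_digamma hx.le]
  constructor <;> linarith
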